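/- arXiv:1008.0538 — 2 statements merged into one kernel-verified Lean document; each statement's English description precedes it below -/
import Mathlib

section
/- Let K be a quasi-algebraically closed field and let L/K be a finite Galois extension with cyclic Galois group. Then the field norm map N_{L/K} : Lˣ → Kˣ is surjective. -/
/-- For a quasi-algebraically closed field `K` and a finite Galois extension `L/K` with
cyclic Galois group, the norm map `N_{L/K} : Lˣ → Kˣ` is surjective. -/
theorem norm_surjective_of_quasi_algebraically_closed
    (K L : Type*) [Field K] [Field L] [Algebra K L]
    [FiniteDimensional K L] [IsGalois K L] [IsCyclic (L ≃ₐ[K] L)]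
    (hqac : ∀ N : ℕ, 1 ≤ N → ∀ (d : ℕ) (f : MvPolynomial (Fin N) K),
      f.IsHomogeneous d → 1 ≤ d → d < N →
      ∃ a : Fin N → K, a ≠ 0 ∧ MvPolynomial.eval a f = 0) :
    Function.Surjective ⇑(Units.map (Algebra.norm K : L →* K)) := by
  classical
  intro c
  set n := Module.finrank K L with hn
  have hn1 : 1 ≤ n := Module.finrank_pos
  let b : Module.Basis (Fin n) K L := Module.finBasis K L
  -- The matrix of linear polynomials representing left multiplication
  let M : Matrix (Fin n) (Fin n) (MvPolynomial (Fin n) K) := fun i j =>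
    ∑ k, MvPolynomial.C (Algebra.leftMulMatrix b (b k) i j) * MvPolynomial.X k
  have hM1 : ∀ i j, (M i j).IsHomogeneous 1 := by
    intro i j
    exact MvPolynomial.IsHomogeneous.sum _ _ _ fun k _ =>
      MvPolynomial.isHomogeneous_C_mul_X _ _
  -- The norm form
  set f : MvPolynomial (Fin n) K := M.det with hfdef
  have hf : f.IsHomogeneous n := by
    rw [hfdef, Matrix.det_apply']
    refine MvPolynomial.IsHomogeneous.sum _ _ _ fun σ _ => ?_
    have hprod : (∏ i, M (σ i) i).IsHomogeneous n := by
      have := MvPolynomial.IsHomogeneous.prod Finset.univ (fun i => M (σ i) i)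
        (fun _ => 1) (fun i _ => hM1 (σ i) i)
      simpa using this
    have : ((Equiv.Perm.sign σ : ℤ) : MvPolynomial (Fin n) K)
        = MvPolynomial.C ((Equiv.Perm.sign σ : ℤ) : K) := by
      simp
    rw [this]
    exact hprod.C_mul _
  -- evaluation of f computes the norm
  have hfeval : ∀ a : Fin n → K,
      MvPolynomial.eval a f = Algebra.norm K (∑ k, a k • b k) := by
    intro a
    have hmap : M.map (MvPolynomial.eval a) = Algebra.leftMulMatrix b (∑ k, a k • b k) := by
      ext i j
      rw [map_sum (Algebra.leftMulMatrix b)]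
      simp_rw [map_smul]
      rw [Matrix.map_apply]
      simp [M, Matrix.map_apply, Matrix.sum_apply, mul_comm]
    rw [hfdef, RingHom.map_det, RingHom.mapMatrix_apply, hmap, Algebra.norm_eq_matrix_det b]
  -- The big polynomial in n+1 variables
  set g : MvPolynomial (Fin (n + 1)) K :=
    MvPolynomial.rename Fin.castSucc f
      - MvPolynomial.C (c : K) * MvPolynomial.X (Fin.last n) ^ n with hgdef
  have hg : g.IsHomogeneous n := by
    refine (hf.rename_isHomogeneous).sub ?_
    simpa using (MvPolynomial.isHomogeneous_X_pow (R := K) (Fin.last n) n).C_mul (c : K)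
  obtain ⟨a, ha0, haeval⟩ := hqac (n + 1) (by omega) n g hg hn1 (by omega)
  have hkey : Algebra.norm K (∑ k, a (Fin.castSucc k) • b k)
      = (c : K) * a (Fin.last n) ^ n := by
    have := haeval
    rw [hgdef] at this
    simp only [map_sub, map_mul, map_pow, MvPolynomial.eval_C, MvPolynomial.eval_X,
      MvPolynomial.eval_rename, sub_eq_zero] at this
    rw [← hfeval]
    exact this
  set x : L := ∑ k, a (Fin.castSucc k) • b k with hxdef
  set t : K := a (Fin.last n) with htdef
  have ht : t ≠ 0 := by
    intro ht0
    have hxnorm : Algebra.norm K x = 0 := by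
      rw [hkey, ht0]
      simp [zero_pow (by omega : n ≠ 0)]
    have hx0 : x = 0 := by
      by_contra hx
      exact (Algebra.norm_ne_zero_iff.mpr hx) hxnorm
    -- then all coefficients vanish, contradicting a ≠ 0
    have hcoeff : ∀ k : Fin n, a (Fin.castSucc k) = 0 := by
      have hx' : b.equivFun.symm (fun k => a (Fin.castSucc k)) = 0 := by
        rw [Module.Basis.equivFun_symm_apply, ← hxdef, hx0]
      have hz := (LinearEquiv.map_eq_zero_iff _).mp hx'
      intro k
      exact congrFun hz k
    apply ha0
    funext i
    refine Fin.lastCases ?_ ?_ i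
    · exact ht0
    · exact hcoeff
  -- construct the preimage
  have hxnorm : Algebra.norm K x = (c : K) * t ^ n := hkey
  have hx : x ≠ 0 := by
    intro hx0
    rw [hx0, Algebra.norm_zero] at hxnorm
    have : (c : K) * t ^ n ≠ 0 := by
      apply mul_ne_zero (Units.ne_zero c) (pow_ne_zero _ ht)
    exact this hxnorm.symm
  set y : L := t⁻¹ • x with hydef
  have hy : y ≠ 0 := smul_ne_zero (inv_ne_zero ht) hx
  have hynorm : Algebra.norm K y = (c : K) := by
    rw [hydef, Algebra.smul_def, map_mul, Algebra.norm_algebraMap, ← hn, hxnorm]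
    field_simp
    rw [one_div, ← mul_pow, inv_mul_cancel₀ ht, one_pow]
  refine ⟨Units.mk0 y hy, ?_⟩
  ext
  simpa using hynorm
end

section
/- Let m ≥ 3 be an odd integer and let D_{2m} be the dihedral group with 2m elements, acting trivially on ℤ. Then the second group cohomology H²(D_{2m}, ℤ) is isomorphic to ℤ/2ℤ. -/
namespace H2Dih

open DihedralGroup

/-- A 2-cocycle on the dihedral group with values in ℤ (trivial action). -/
structure Cocycle (m : ℕ) where
  f : DihedralGroup m × DihedralGroup m → ℤ
  cocycle : ∀ g h j : DihedralGroup m,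
    f (g * h, j) + f (g, h) = f (h, j) + f (g, h * j)

namespace Cocycle

variable {m : ℕ} (c : Cocycle m)

/-- the normalization constant -/
def e : ℤ := c.f (1, 1)

lemma f_one_left (g : DihedralGroup m) : c.f (1, g) = c.e := by
  have := c.cocycle 1 1 g
  simp only [one_mul] at this
  unfold e; omega

lemma f_one_right (g : DihedralGroup m) : c.f (g, 1) = c.e := by
  have := c.cocycle g 1 1
  simp only [mul_one] at this
  rw [c.f_one_left 1] at this
  omega

lemma f_inv (g : DihedralGroup m) : c.f (g⁻¹, g) = c.f (g, g⁻¹) := by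
  have := c.cocycle g g⁻¹ g
  rw [mul_inv_cancel, inv_mul_cancel, c.f_one_left g, c.f_one_right g] at this
  omega

end Cocycle

/-- The central extension of the dihedral group by ℤ determined by the cocycle `c`. -/
structure Ext {m : ℕ} (c : Cocycle m) where
  n : ℤ
  g : DihedralGroup m

namespace Ext

variable {m : ℕ} {c : Cocycle m}

instance : Mul (Ext c) := ⟨fun x y => ⟨x.n + y.n + c.f (x.g, y.g) - c.e, x.g * y.g⟩⟩
instance : One (Ext c) := ⟨⟨0, 1⟩⟩
instance : Inv (Ext c) := ⟨fun x => ⟨c.e - x.n - c.f (x.g, x.g⁻¹), x.g⁻¹⟩⟩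

lemma mul_def' (x y : Ext c) :
    x * y = ⟨x.n + y.n + c.f (x.g, y.g) - c.e, x.g * y.g⟩ := rfl

instance : Group (Ext c) where
  mul_assoc x y z := by
    have := c.cocycle x.g y.g z.g
    simp only [mul_def', Ext.mk.injEq]
    exact ⟨by omega, mul_assoc _ _ _⟩
  one_mul x := by
    obtain ⟨n, g⟩ := x
    have := c.f_one_left g
    show (⟨0 + n + c.f (1, g) - c.e, 1 * g⟩ : Ext c) = ⟨n, g⟩
    simp only [Ext.mk.injEq, one_mul]
    exact ⟨by omega, trivial⟩
  mul_one x := by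
    obtain ⟨n, g⟩ := x
    have := c.f_one_right g
    show (⟨n + 0 + c.f (g, 1) - c.e, g * 1⟩ : Ext c) = ⟨n, g⟩
    simp only [Ext.mk.injEq, mul_one]
    exact ⟨by omega, trivial⟩
  inv_mul_cancel x := by
    obtain ⟨n, g⟩ := x
    have := c.f_inv g
    show (⟨(c.e - n - c.f (g, g⁻¹)) + n + c.f (g⁻¹, g) - c.e, g⁻¹ * g⟩ : Ext c) = ⟨0, 1⟩
    simp only [Ext.mk.injEq, inv_mul_cancel]
    exact ⟨by omega, trivial⟩

lemma one_def : (1 : Ext c) = ⟨0, 1⟩ := rfl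

/-- projection to the dihedral group -/
def π : Ext c →* DihedralGroup m where
  toFun x := x.g
  map_one' := rfl
  map_mul' _ _ := rfl

/-- the canonical central element -/
def t : Ext c := ⟨1, 1⟩

lemma t_mul (k : ℤ) (x : Ext c) : (⟨k, 1⟩ : Ext c) * x = ⟨k + x.n, x.g⟩ := by
  rw [mul_def']
  simp [c.f_one_left]

lemma mul_t (k : ℤ) (x : Ext c) : x * (⟨k, 1⟩ : Ext c) = ⟨x.n + k, x.g⟩ := by
  rw [mul_def']
  simp [c.f_one_right]

lemma t_zpow (k : ℤ) : (t : Ext c) ^ k = ⟨k, 1⟩ := by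
  induction k using Int.induction_on with
  | zero => rfl
  | succ i ih =>
      rw [zpow_add_one, ih, show (t : Ext c) = ⟨1,1⟩ from rfl, mul_t]
  | pred i ih =>
      rw [zpow_sub_one, ih]
      have : (⟨(-i : ℤ) - 1, 1⟩ : Ext c) * t = ⟨-i, 1⟩ := by
        rw [show (t : Ext c) = ⟨1,1⟩ from rfl, mul_t]; ring_nf
      exact mul_right_cancel (b := t) (by rw [this, inv_mul_cancel_right])

lemma t_zpow_commute (k : ℤ) (x : Ext c) : (t : Ext c) ^ k * x = x * t ^ k := by
  rw [t_zpow, t_mul, mul_t, add_comm]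

lemma t_zpow_inj {j k : ℤ} (h : (t : Ext c) ^ j = t ^ k) : j = k := by
  rw [t_zpow, t_zpow] at h
  exact (Ext.mk.injEq _ _ _ _).mp h |>.1

lemma eq_t_zpow {x : Ext c} (h : x.g = 1) : x = t ^ x.n := by
  rw [t_zpow]
  cases x; simp_all

end Ext


namespace Ext

variable {m : ℕ} {c : Cocycle m}

/-- lift of the rotation -/
def R : Ext c := ⟨0, DihedralGroup.r 1⟩

/-- lift of the reflection -/
def S : Ext c := ⟨0, DihedralGroup.sr 0⟩

lemma tmul_mul_tmul (k l : ℤ) (x y : Ext c) :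
    (t ^ k * x) * (t ^ l * y) = t ^ (k + l) * (x * y) := by
  rw [mul_assoc, ← mul_assoc x, ← t_zpow_commute l x, mul_assoc, ← mul_assoc, ← zpow_add]

lemma tmul_inv (k : ℤ) (x : Ext c) : (t ^ k * x)⁻¹ = t ^ (-k) * x⁻¹ := by
  rw [mul_inv_rev, ← zpow_neg]
  exact (t_zpow_commute (-k) x⁻¹).symm

end Ext

open Ext in
theorem exists_coboundary {m : ℕ} [NeZero m] (hodd : Odd m) (c : Cocycle m)
    (hb : (2 : ℤ) ∣ c.f (sr 0, sr 0) - c.e) :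
    ∃ x : DihedralGroup m → ℤ, ∀ g h, c.f (g, h) = x h - x (g * h) + x g := by
  -- `R ^ m` is central
  have hRm_g : ((R : Ext c) ^ m).g = 1 := by
    show π ((R : Ext c) ^ m) = 1
    rw [map_pow]
    show (r 1 : DihedralGroup m) ^ m = 1
    rw [DihedralGroup.r_one_pow, ZMod.natCast_self, ← DihedralGroup.one_def]
  set a : ℤ := ((R : Ext c) ^ m).n with ha
  have hRm : (R : Ext c) ^ m = t ^ a := eq_t_zpow hRm_g
  -- `S ^ 2` is central
  have hS2_g : ((S : Ext c) ^ 2).g = 1 := by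
    show π ((S : Ext c) ^ 2) = 1
    rw [map_pow]
    show (sr 0 : DihedralGroup m) ^ 2 = 1
    rw [pow_two, DihedralGroup.sr_mul_sr, sub_self, ← DihedralGroup.one_def]
  set b : ℤ := ((S : Ext c) ^ 2).n with hbdef
  have hS2 : (S : Ext c) ^ 2 = t ^ b := eq_t_zpow hS2_g
  have hbval : b = c.f (sr 0, sr 0) - c.e := by
    rw [hbdef, pow_two, mul_def']
    simp [S]
  -- the commutator relation
  set w : Ext c := S * R * S⁻¹ * R with hwdef
  have hw_g : w.g = 1 := by
    show π w = 1
    rw [hwdef]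
    simp only [map_mul, map_inv]
    show (sr 0 : DihedralGroup m) * r 1 * (sr 0)⁻¹ * r 1 = 1
    have hinv : ((sr 0 : DihedralGroup m))⁻¹ = sr 0 := rfl
    rw [hinv, DihedralGroup.sr_mul_r, DihedralGroup.sr_mul_sr, DihedralGroup.r_mul_r,
      DihedralGroup.one_def]
    ring_nf
  set cc : ℤ := w.n with hccdef
  have hw : w = t ^ cc := eq_t_zpow hw_g
  have hconj0 : (S : Ext c) * R * S⁻¹ = t ^ cc * R⁻¹ := by
    have : w * R⁻¹ = S * R * S⁻¹ := by rw [hwdef, mul_inv_cancel_right]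
    rw [← this, hw]
  -- the relation 2 a = m * cc
  have hrel : 2 * a = cc * m := by
    have h1 : (S : Ext c) * (R ^ m) * S⁻¹ = (S * R * S⁻¹) ^ m := (conj_pow).symm
    have h2 : (S : Ext c) * (R ^ m) * S⁻¹ = t ^ a := by
      rw [hRm, ← t_zpow_commute a S, mul_assoc, mul_inv_cancel, mul_one]
    have h3 : ((S : Ext c) * R * S⁻¹) ^ m = t ^ (cc * m + -a) := by
      rw [hconj0]
      have hcomm : Commute ((t : Ext c) ^ cc) R⁻¹ := t_zpow_commute cc R⁻¹
      rw [hcomm.mul_pow, inv_pow, hRm, ← zpow_natCast ((t : Ext c) ^ cc) m, ← zpow_mul,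
        ← zpow_neg, ← zpow_add]
    have h5 : (t : Ext c) ^ a = t ^ (cc * (m : ℤ) + -a) := by rw [← h2, h1, h3]
    have h4 := t_zpow_inj (c := c) h5
    linarith
  -- cc is even
  obtain ⟨u, hu⟩ : (2 : ℤ) ∣ cc := by
    rcases Int.even_mul.mp (⟨a, by omega⟩ : Even (cc * (m : ℤ))) with h | h
    · exact h.two_dvd
    · exfalso
      exact (Int.not_odd_iff_even.mpr h) (Int.odd_coe_nat m |>.mpr hodd)
  have hau : a = u * m := by
    have : 2 * a = 2 * (u * m) := by rw [hrel, hu]; ring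
    linarith
  obtain ⟨v, hv⟩ : (2 : ℤ) ∣ b := hbval ▸ hb
  -- the corrected lifts
  set R₁ : Ext c := t ^ (-u) * R with hR₁def
  set S₁ : Ext c := t ^ (-v) * S with hS₁def
  have hcR : Commute ((t : Ext c) ^ (-u)) R := t_zpow_commute (-u) R
  have hcS : Commute ((t : Ext c) ^ (-v)) S := t_zpow_commute (-v) S
  have hR₁m : R₁ ^ m = 1 := by
    rw [hR₁def, hcR.mul_pow, hRm, ← zpow_natCast ((t : Ext c) ^ (-u)) m, ← zpow_mul, ← zpow_add,
      show (-u * (m : ℤ) + a : ℤ) = 0 from by rw [hau]; ring]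
    exact zpow_zero _
  have hS₁2 : S₁ ^ 2 = 1 := by
    rw [hS₁def, hcS.mul_pow, hS2, ← zpow_natCast ((t : Ext c) ^ (-v)) 2, ← zpow_mul, ← zpow_add,
      show (-v * ((2 : ℕ) : ℤ) + b : ℤ) = 0 from by rw [hv]; push_cast; ring]
    exact zpow_zero _
  have hconj : S₁ * R₁ * S₁⁻¹ = R₁⁻¹ := by
    have e1 : S₁ * R₁ = t ^ (-v + -u) * (S * R) := by rw [hS₁def, hR₁def, tmul_mul_tmul]
    have e2 : S₁⁻¹ = t ^ (-(-v)) * S⁻¹ := by rw [hS₁def, tmul_inv]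
    rw [e1, e2, tmul_mul_tmul, hconj0, ← mul_assoc, ← zpow_add,
      show (-v + -u + - -v + cc : ℤ) = - -u from by linarith, hR₁def, tmul_inv]
  -- semiconjugation
  have hsemi : SemiconjBy S₁ R₁ R₁⁻¹ := by
    have := congrArg (fun z => z * S₁) hconj
    simp only [inv_mul_cancel_right] at this
    exact this
  have hsc : ∀ k : ℤ, S₁ * R₁ ^ k = R₁ ^ (-k) * S₁ := fun k => by
    have := (hsemi.zpow_right k)
    rw [SemiconjBy] at this
    rw [this, inv_zpow, ← zpow_neg]
  -- periodicity of powers of R₁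
  have hper : ∀ k l : ℤ, ((k : ZMod m) = (l : ZMod m)) → R₁ ^ k = R₁ ^ l := by
    intro k l h
    obtain ⟨q, hq⟩ : (m : ℤ) ∣ (k - l) := by
      rwa [← ZMod.intCast_zmod_eq_zero_iff_dvd, Int.cast_sub, sub_eq_zero]
    have hk : k = l + (m : ℤ) * q := by omega
    rw [hk, zpow_add, zpow_mul, zpow_natCast, hR₁m, one_zpow, mul_one]
  have hval : ∀ i : ZMod m, (((i.val : ℤ)) : ZMod m) = i := by
    intro i
    rw [Int.cast_natCast, ZMod.natCast_rightInverse i]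
  -- the splitting
  set σ : DihedralGroup m → Ext c := fun g =>
    DihedralGroup.casesOn g (fun i => R₁ ^ (i.val : ℤ)) (fun i => S₁ * R₁ ^ (i.val : ℤ))
    with hσ
  have hσr : ∀ i : ZMod m, σ (r i) = R₁ ^ (i.val : ℤ) := fun i => rfl
  have hσsr : ∀ i : ZMod m, σ (sr i) = S₁ * R₁ ^ (i.val : ℤ) := fun i => rfl
  have hmul : ∀ g h : DihedralGroup m, σ g * σ h = σ (g * h) := by
    intro g h
    match g, h with
    | DihedralGroup.r i, DihedralGroup.r j =>
        rw [DihedralGroup.r_mul_r, hσr, hσr, hσr, ← zpow_add]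
        exact hper _ _ (by push_cast [hval]; simp)
    | DihedralGroup.r i, DihedralGroup.sr j =>
        rw [DihedralGroup.r_mul_sr, hσr, hσsr, hσsr, ← mul_assoc,
          show R₁ ^ (i.val : ℤ) * S₁ = S₁ * R₁ ^ (-(i.val : ℤ)) from by rw [hsc, neg_neg],
          mul_assoc, ← zpow_add]
        congr 1
        exact hper _ _ (by push_cast [hval]; ring)
    | DihedralGroup.sr i, DihedralGroup.r j =>
        rw [DihedralGroup.sr_mul_r, hσsr, hσr, hσsr, mul_assoc, ← zpow_add]
        congr 1
        exact hper _ _ (by push_cast [hval]; ring)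
    | DihedralGroup.sr i, DihedralGroup.sr j =>
        rw [DihedralGroup.sr_mul_sr, hσsr, hσsr, hσr, hsc, mul_assoc,
          ← mul_assoc S₁ S₁, ← pow_two, hS₁2, one_mul, ← zpow_add]
        exact hper _ _ (by push_cast [hval]; ring)
  -- second components
  have hπR₁ : π (R₁ : Ext c) = r 1 := by
    rw [hR₁def, map_mul, t_zpow, show π (⟨-u, 1⟩ : Ext c) = 1 from rfl,
      show π (R : Ext c) = r 1 from rfl, one_mul]
  have hπS₁ : π (S₁ : Ext c) = sr 0 := by
    rw [hS₁def, map_mul, t_zpow, show π (⟨-v, 1⟩ : Ext c) = 1 from rfl,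
      show π (S : Ext c) = sr 0 from rfl, one_mul]
  have hg : ∀ g : DihedralGroup m, (σ g).g = g := by
    intro g
    match g with
    | DihedralGroup.r i =>
        show π (σ (r i)) = r i
        rw [hσr, map_zpow, hπR₁, zpow_natCast, DihedralGroup.r_one_pow,
          ZMod.natCast_rightInverse i]
    | DihedralGroup.sr i =>
        show π (σ (sr i)) = sr i
        rw [hσsr, map_mul, map_zpow, hπR₁, hπS₁, zpow_natCast, DihedralGroup.r_one_pow,
          DihedralGroup.sr_mul_r, zero_add, ZMod.natCast_rightInverse i]
  -- extract the coboundary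
  refine ⟨fun g => c.e - (σ g).n, fun g h => ?_⟩
  have h1 := congrArg Ext.n (hmul g h)
  rw [mul_def'] at h1
  simp only [hg] at h1
  show c.f (g, h) = (c.e - (σ h).n) - (c.e - (σ (g * h)).n) + (c.e - (σ g).n)
  omega


section Sums

variable {m : ℕ} [NeZero m]

/-- enumeration of the dihedral group -/
def dihEquiv (m : ℕ) : ZMod m ⊕ ZMod m ≃ DihedralGroup m where
  toFun := Sum.elim DihedralGroup.r DihedralGroup.sr
  invFun g := DihedralGroup.casesOn g Sum.inl Sum.inr
  left_inv := by rintro (i | i) <;> rfl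
  right_inv := by rintro (i | i) <;> rfl

lemma sum_dih (F : DihedralGroup m → ℤ) :
    ∑ g : DihedralGroup m, F g = (∑ i : ZMod m, F (r i)) + ∑ i : ZMod m, F (sr i) := by
  rw [← Equiv.sum_comp (dihEquiv m) F, Fintype.sum_sum_type]
  rfl

lemma sum_shift (F : DihedralGroup m → ℤ) (s : DihedralGroup m) :
    ∑ g : DihedralGroup m, F (s * g) = ∑ g : DihedralGroup m, F g :=
  Equiv.sum_comp (Equiv.mulLeft s) F

/-- The total sum `∑ h, f (sr 0, h)` of a cocycle equals `m * (e + f (sr 0, sr 0))`. -/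
lemma Cocycle.sum_eq (c : Cocycle m) :
    ∑ h : DihedralGroup m, c.f (sr 0, h)
      = m * (c.e + c.f (sr 0, sr 0)) := by
  have hpt : ∀ j : DihedralGroup m,
      c.f (sr 0, j) + c.f (sr 0, sr 0 * j) = c.e + c.f (sr 0, sr 0) := by
    intro j
    have h0 := c.cocycle (sr 0) (sr 0) j
    rw [DihedralGroup.sr_mul_sr, sub_self, ← DihedralGroup.one_def, c.f_one_left j] at h0
    omega
  have h1 : ∑ j : DihedralGroup m, (c.f (sr 0, j) + c.f (sr 0, sr 0 * j))
      = (Fintype.card (DihedralGroup m)) * (c.e + c.f (sr 0, sr 0)) := by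
    rw [Finset.sum_congr rfl fun j _ => hpt j, Finset.sum_const, Finset.card_univ,
      nsmul_eq_mul]
  rw [Finset.sum_add_distrib, sum_shift (fun g => c.f (sr 0, g)) (sr 0),
    DihedralGroup.card] at h1
  push_cast at h1 ⊢
  linarith

/-- indicator of the reflections -/
def ind : DihedralGroup m → ℤ := fun g => DihedralGroup.casesOn g (fun _ => 0) (fun _ => 1)

/-- the generating cocycle -/
def genCocycle (m : ℕ) : Cocycle m where
  f p := ind p.1 * ind p.2
  cocycle g h j := by
    cases g <;> cases h <;> cases j <;>
      simp [ind, DihedralGroup.r_mul_r, DihedralGroup.r_mul_sr, DihedralGroup.sr_mul_r,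
        DihedralGroup.sr_mul_sr]

omit [NeZero m] in
lemma genCocycle_e : (genCocycle m).e = 0 := by
  simp [Cocycle.e, genCocycle, DihedralGroup.one_def, ind, -DihedralGroup.r_zero]

lemma genCocycle_sum :
    ∑ h : DihedralGroup m, (genCocycle m).f (sr 0, h) = m := by
  have h1 : ∀ h : DihedralGroup m, (genCocycle m).f (sr 0, h) = ind h := by
    intro h
    show ind (sr 0) * ind h = ind h
    show 1 * ind h = ind h
    rw [one_mul]
  rw [Finset.sum_congr rfl fun h _ => h1 h, sum_dih ind]
  show (∑ _i : ZMod m, (0:ℤ)) + (∑ _i : ZMod m, (1:ℤ)) = m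
  simp [ZMod.card]

end Sums


section Interface

open groupCohomology

variable {m : ℕ}

/-- Convert an element of `twoCocycles` to our `Cocycle` structure. -/
def toCocycle (f : cocycles₂ (Rep.trivial ℤ (DihedralGroup m) ℤ)) : Cocycle m where
  f p := f.1 p
  cocycle g h j := by
    have h0 := (mem_cocycles₂_iff (A := Rep.trivial ℤ (DihedralGroup m) ℤ) f.1).mp f.2 g h j
    rwa [Rep.trivial_ρ_apply] at h0

/-- Convert a `Cocycle` structure to an element of `twoCocycles`. -/
def Cocycle.toTwo (c : Cocycle m) : cocycles₂ (Rep.trivial ℤ (DihedralGroup m) ℤ) :=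
  ⟨c.f, (mem_cocycles₂_iff (A := Rep.trivial ℤ (DihedralGroup m) ℤ) c.f).mpr fun g h j => by
    rw [Rep.trivial_ρ_apply]
    exact c.cocycle g h j⟩

lemma mem_cob_iff (f : DihedralGroup m × DihedralGroup m → ℤ) :
    f ∈ coboundaries₂ (Rep.trivial ℤ (DihedralGroup m) ℤ) ↔
      ∃ x : DihedralGroup m → ℤ, ∀ g h,
        (Rep.trivial ℤ (DihedralGroup m) ℤ).ρ g (x h) - x (g * h) + x g = f (g, h) := by
  constructor
  · rintro ⟨x, rfl⟩
    exact ⟨x, fun g h => rfl⟩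
  · rintro ⟨x, hx⟩
    exact ⟨x, funext fun p => hx p.1 p.2⟩

end Interface

end H2Dih

open H2Dih DihedralGroup groupCohomology

/-- For odd `m ≥ 3`, the second group cohomology of the dihedral group with `2m`
elements acting trivially on `ℤ` is `ℤ/2ℤ`. -/
theorem h2_dihedralGroup (m : ℕ) (hodd : Odd m) (hm : 3 ≤ m) :
    Nonempty ((groupCohomology (Rep.trivial ℤ (DihedralGroup m) ℤ) 2) ≃+ ZMod 2) := by
  haveI : NeZero m := ⟨by omega⟩
  set A := Rep.trivial ℤ (DihedralGroup m) ℤ with hA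
  -- the parity homomorphism on 2-cocycles
  let Φ : cocycles₂ A →+ ZMod 2 :=
    { toFun := fun f => (((∑ h : DihedralGroup m, (toCocycle f).f (sr 0, h)) : ℤ) : ZMod 2)
      map_zero' := by
        show (((∑ h : DihedralGroup m, (toCocycle (0 : cocycles₂ A)).f (sr 0, h)) : ℤ)
          : ZMod 2) = 0
        have h0 : ∀ h : DihedralGroup m,
            (toCocycle (0 : cocycles₂ A)).f (sr 0, h) = 0 := fun h => rfl
        rw [Finset.sum_congr rfl fun h _ => h0 h, Finset.sum_const_zero, Int.cast_zero]
      map_add' := fun f₁ f₂ => by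
        show (((∑ h : DihedralGroup m, (toCocycle (f₁ + f₂)).f (sr 0, h)) : ℤ) : ZMod 2)
          = (((∑ h : DihedralGroup m, (toCocycle f₁).f (sr 0, h)) : ℤ) : ZMod 2)
            + (((∑ h : DihedralGroup m, (toCocycle f₂).f (sr 0, h)) : ℤ) : ZMod 2)
        have h0 : ∀ h : DihedralGroup m,
            (toCocycle (f₁ + f₂)).f (sr 0, h)
              = (toCocycle f₁).f (sr 0, h) + (toCocycle f₂).f (sr 0, h) := fun h => rfl
        rw [Finset.sum_congr rfl fun h _ => h0 h, Finset.sum_add_distrib, Int.cast_add] }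
  have hΦ : ∀ f : cocycles₂ A,
      Φ f = (((∑ h : DihedralGroup m, (toCocycle f).f (sr 0, h)) : ℤ) : ZMod 2) := fun _ => rfl
  let Φl : cocycles₂ A →ₗ[ℤ] ZMod 2 := Φ.toIntLinearMap
  set B : Submodule ℤ (cocycles₂ A) := LinearMap.ker (H2π A).hom with hB
  -- coboundaries are in the kernel
  have hker : B ≤ LinearMap.ker Φl := by
    intro f hf
    obtain ⟨x, hx⟩ := (mem_cob_iff f.1).mp ((H2π_eq_zero_iff f).mp (LinearMap.mem_ker.mp hf))
    set y : DihedralGroup m → ℤ := x with hy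
    have hx' : ∀ g h : DihedralGroup m,
        (toCocycle f).f (g, h) = y h - y (g * h) + y g := by
      intro g h
      have h1 := hx g h
      rw [Rep.trivial_ρ_apply] at h1
      exact h1.symm
    have hsum : ∑ h : DihedralGroup m, (toCocycle f).f (sr 0, h)
        = 2 * m * y (sr 0) := by
      rw [Finset.sum_congr rfl fun h _ => hx' (sr 0) h, Finset.sum_add_distrib,
        Finset.sum_sub_distrib, sum_shift y (sr 0), Finset.sum_const, Finset.card_univ,
        DihedralGroup.card, nsmul_eq_mul]
      push_cast
      ring
    have : Φ f = 0 := by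
      rw [hΦ, hsum, ZMod.intCast_zmod_eq_zero_iff_dvd]
      exact ⟨(m : ℤ) * y (sr 0), by push_cast; ring⟩
    exact LinearMap.mem_ker.mpr this
  -- the kernel consists of coboundaries
  have hker2 : LinearMap.ker Φl ≤ B := by
    intro f hf
    have h0 : Φ f = 0 := hf
    rw [hΦ, ZMod.intCast_zmod_eq_zero_iff_dvd] at h0
    rw [(toCocycle f).sum_eq] at h0
    have hmK : (2 : ℤ) ∣ ((toCocycle f).e + (toCocycle f).f (sr 0, sr 0)) := by
      rcases (Int.Prime.dvd_mul' Nat.prime_two h0) with h | h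
      · exfalso
        obtain ⟨k, hk⟩ := hodd
        obtain ⟨l, hl⟩ := h
        omega
      · exact h
    have hb : (2 : ℤ) ∣ (toCocycle f).f (sr 0, sr 0) - (toCocycle f).e := by
      obtain ⟨k, hk⟩ := hmK
      exact ⟨k - (toCocycle f).e, by omega⟩
    obtain ⟨x, hx⟩ := exists_coboundary hodd (toCocycle f) hb
    refine LinearMap.mem_ker.mpr ((H2π_eq_zero_iff f).mpr ((mem_cob_iff f.1).mpr ⟨x, fun g h => ?_⟩))
    rw [Rep.trivial_ρ_apply]
    exact (hx g h).symm
  -- the quotient map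
  let Φbar := Submodule.liftQ B Φl hker
  have hinj : Function.Injective Φbar := by
    rw [← LinearMap.ker_eq_bot]
    exact Submodule.ker_liftQ_eq_bot _ _ _ hker2
  have hsurj : Function.Surjective Φbar := by
    intro y
    rcases (by decide : ∀ z : ZMod 2, z = 0 ∨ z = 1) y with rfl | rfl
    · exact ⟨0, map_zero _⟩
    · refine ⟨Submodule.Quotient.mk ((genCocycle m).toTwo), ?_⟩
      rw [Submodule.liftQ_apply]
      show Φ ((genCocycle m).toTwo) = 1
      have h1 : ∀ h : DihedralGroup m,
          (toCocycle ((genCocycle m).toTwo)).f (sr 0, h) = (genCocycle m).f (sr 0, h) :=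
        fun h => rfl
      rw [hΦ, Finset.sum_congr rfl fun h _ => h1 h, genCocycle_sum]
      obtain ⟨k, hk⟩ := hodd
      subst hk
      push_cast
      rw [show ((2 : ZMod 2)) = 0 from by decide]
      ring
  let e1 : (cocycles₂ A ⧸ B) ≃ₗ[ℤ] ZMod 2 :=
    LinearEquiv.ofBijective Φbar ⟨hinj, hsurj⟩
  refine ⟨AddEquiv.trans ?_ e1.toAddEquiv⟩
  exact (LinearMap.quotKerEquivOfSurjective (H2π A).hom
    ((ModuleCat.epi_iff_surjective _).mp inferInstance)).symm.toAddEquiv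
end
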